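/- Let Ω ⊂ ℝ² be a convex domain and let ψ : Ω → ℝ be differentiable. For p = (a,b) ∈ Ω write ψ^{a,b}(x,y) = ψ(x,y) − [ψ(a,b) + (x−a)ψ_x(a,b) + (y−b)ψ_y(a,b)]. Suppose that for every point (a,b) ∈ Ω there is a neighborhood U of (a,b) such that either (i) ψ^{a,b} > 0 on U \ {(a,b)}, or (ii) ψ^{a,b} < 0 on U \ {(a,b)}. Then the same alternative holds at all points of Ω: either (i) holds at every point of Ω, or (ii) holds at every point of Ω. In the first case ψ is strictly convex on Ω; in the second case ψ is strictly concave on Ω. -/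

import Mathlib

open Complex

/-- The deviation `ψ^{a,b}` of `ψ` from its tangent plane at `p`, evaluated at `q`:
`ψ(q) − ψ(p) − Dψ(p)(q − p)`.  Here `ℝ²` is identified with `ℂ`. -/
noncomputable def tangentDev (ψ : ℂ → ℝ) (p q : ℂ) : ℝ :=
  ψ q - ψ p - fderiv ℝ ψ p (q - p)

open Set Filter Topology

namespace Stmt16Aux

noncomputable def Dv (f : ℝ → ℝ) (s t : ℝ) : ℝ := f t - f s - deriv f s * (t - s)

def OneA (f : ℝ → ℝ) (J : Set ℝ) (s : ℝ) : Prop :=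
  ∃ δ > 0, Ioo (s - δ) (s + δ) ⊆ J ∧ ∀ t ∈ Ioo (s - δ) (s + δ), t ≠ s → 0 < Dv f s t

def OneB (f : ℝ → ℝ) (J : Set ℝ) (s : ℝ) : Prop :=
  ∃ δ > 0, Ioo (s - δ) (s + δ) ⊆ J ∧ ∀ t ∈ Ioo (s - δ) (s + δ), t ≠ s → Dv f s t < 0

def LocCvx (f : ℝ → ℝ) (J : Set ℝ) (t : ℝ) : Prop :=
  ∃ ε > 0, Ioo (t - ε) (t + ε) ⊆ J ∧ ConvexOn ℝ (Ioo (t - ε) (t + ε)) f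

def LocCcv (f : ℝ → ℝ) (J : Set ℝ) (t : ℝ) : Prop :=
  ∃ ε > 0, Ioo (t - ε) (t + ε) ⊆ J ∧ ConcaveOn ℝ (Ioo (t - ε) (t + ε)) f

def Kset (f : ℝ → ℝ) (J : Set ℝ) : Set ℝ :=
  {t | t ∈ J ∧ ¬ LocCvx f J t ∧ ¬ LocCcv f J t}

def An (f : ℝ → ℝ) (n : ℕ) : Set ℝ :=
  {q | ∀ x, x ≠ q → |x - q| < 1/(n+1) → 0 < Dv f q x}

def Bn (f : ℝ → ℝ) (n : ℕ) : Set ℝ :=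
  {q | ∀ x, x ≠ q → |x - q| < 1/(n+1) → Dv f q x < 0}


lemma dv_neg (f : ℝ → ℝ) (s t : ℝ) : Dv (fun x => -f x) s t = - Dv f s t := by
  simp [Dv, deriv.neg]; ring

lemma oneA_neg {f : ℝ → ℝ} {J : Set ℝ} {s : ℝ} (h : OneA f J s) :
    OneB (fun x => -f x) J s := by
  obtain ⟨δ, hδ, hsub, hpos⟩ := h
  exact ⟨δ, hδ, hsub, fun t ht hts => by rw [dv_neg]; linarith [hpos t ht hts]⟩

lemma oneB_neg {f : ℝ → ℝ} {J : Set ℝ} {s : ℝ} (h : OneB f J s) :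
    OneA (fun x => -f x) J s := by
  obtain ⟨δ, hδ, hsub, hpos⟩ := h
  exact ⟨δ, hδ, hsub, fun t ht hts => by rw [dv_neg]; linarith [hpos t ht hts]⟩

/-- convex tangent line lies below the function, at interior points of any set. -/
lemma tangent_le {f : ℝ → ℝ} {s : Set ℝ} (hf : ConvexOn ℝ s f) {t x : ℝ}
    (ht : t ∈ s) (hx : x ∈ s) (hd : DifferentiableAt ℝ f t) :
    f t + deriv f t * (x - t) ≤ f x := by
  rcases lt_trichotomy x t with h | h | h
  · have h1 : slope f x t ≤ deriv f t := hf.slope_le_deriv hx ht h hd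
    rw [slope_def_field] at h1
    have h2 : t - x > 0 := by linarith
    rw [div_le_iff₀ h2] at h1
    nlinarith
  · simp [h]
  · have h1 : deriv f t ≤ slope f t x := hf.deriv_le_slope ht hx h hd
    rw [slope_def_field] at h1
    have h2 : x - t > 0 := by linarith
    rw [le_div_iff₀ h2] at h1
    nlinarith

/-- a differentiable function lying above all of its tangent lines on a convex set is convex. -/
lemma convexOn_of_tangent_le {f : ℝ → ℝ} {s : Set ℝ} (hs : Convex ℝ s)
    (h : ∀ t ∈ s, ∀ x ∈ s, f t + deriv f t * (x - t) ≤ f x) : ConvexOn ℝ s f := by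
  refine ⟨hs, fun x hx z hz a b ha hb hab => ?_⟩
  have hy : a • x + b • z ∈ s := hs hx hz ha hb hab
  set y := a • x + b • z with hydef
  have h1 := h y hy x hx
  have h2 := h y hy z hz
  have hyy : y = a*x + b*z := by simp [hydef, smul_eq_mul]
  have hy0 : a*(x - y) + b*(z - y) = 0 := by
    have hb' : b = 1 - a := by linarith
    rw [hyy, hb']; ring
  have e2 : a*(f y + deriv f y*(x-y)) + b*(f y + deriv f y*(z-y))
      = f y + deriv f y * (a*(x-y) + b*(z-y)) := by linear_combination (f y) * hab
  have hsum := add_le_add (mul_le_mul_of_nonneg_left h1 ha) (mul_le_mul_of_nonneg_left h2 hb)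
  rw [e2, hy0, mul_zero, add_zero] at hsum
  simpa [smul_eq_mul] using hsum

variable {f : ℝ → ℝ} {J : Set ℝ} {c d t x : ℝ}

lemma tendsto_slope_right (hd : DifferentiableAt ℝ f t) :
    Tendsto (slope f t) (𝓝[>] t) (𝓝 (deriv f t)) :=
  (hasDerivAt_iff_tendsto_slope.mp hd.hasDerivAt).mono_left
    (nhdsWithin_mono _ (fun y hy => ne_of_gt hy))

lemma tendsto_slope_left (hd : DifferentiableAt ℝ f t) :
    Tendsto (slope f t) (𝓝[<] t) (𝓝 (deriv f t)) :=
  (hasDerivAt_iff_tendsto_slope.mp hd.hasDerivAt).mono_left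
    (nhdsWithin_mono _ (fun y hy => ne_of_lt hy))

/-- slope from the left endpoint of an interval of convexity is monotone. -/
lemma slope_endpoint_mono (hcvx : ConvexOn ℝ (Ioo c d) f) (hc : ContinuousAt f c)
    {y : ℝ} (hy : y ∈ Ioo c d) (hx : x ∈ Ioo c d) (hyx : y ≤ x) :
    slope f c y ≤ slope f c x := by
  have hcy : c < y := hy.1
  have lim : ∀ u, u ∈ Ioo c d →
      Tendsto (fun z => slope f z u) (𝓝[>] c) (𝓝 (slope f c u)) := by
    intro u hu
    simp only [slope_comm f _ u, slope_def_field]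
    apply Tendsto.div
    · exact (hc.tendsto.mono_left nhdsWithin_le_nhds).sub tendsto_const_nhds
    · exact (tendsto_id.mono_left nhdsWithin_le_nhds).sub tendsto_const_nhds
    · exact sub_ne_zero.mpr (ne_of_lt hu.1)
  refine le_of_tendsto_of_tendsto (lim y hy) (lim x hx) ?_
  filter_upwards [Ioo_mem_nhdsGT_of_mem (left_mem_Ico.mpr hcy)] with z hz
  have hzI : z ∈ Ioo c d := ⟨hz.1, hz.2.trans hy.2⟩
  exact hcvx.slope_mono hzI ⟨hy, ne_of_gt hz.2⟩
    ⟨hx, ne_of_gt (hz.2.trans_le hyx)⟩ hyx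

/-- slope to the right endpoint of an interval of convexity is monotone. -/
lemma slope_endpoint_mono' (hcvx : ConvexOn ℝ (Ioo c d) f) (hd : ContinuousAt f d)
    {y : ℝ} (hy : y ∈ Ioo c d) (hx : x ∈ Ioo c d) (hyx : x ≤ y) :
    slope f x d ≤ slope f y d := by
  have hyd : y < d := hy.2
  have lim : ∀ u, u ∈ Ioo c d →
      Tendsto (fun z => slope f u z) (𝓝[<] d) (𝓝 (slope f u d)) := by
    intro u hu
    simp only [slope_def_field]
    apply Tendsto.div
    · exact (hd.tendsto.mono_left nhdsWithin_le_nhds).sub tendsto_const_nhds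
    · exact (tendsto_id.mono_left nhdsWithin_le_nhds).sub tendsto_const_nhds
    · exact sub_ne_zero.mpr (ne_of_gt hu.2)
  have h1 : Tendsto (fun z => slope f x z) (𝓝[<] d) (𝓝 (slope f x d)) := lim x hx
  have h2 : Tendsto (fun z => slope f y z) (𝓝[<] d) (𝓝 (slope f y d)) := lim y hy
  refine le_of_tendsto_of_tendsto h1 h2 ?_
  filter_upwards [Ioo_mem_nhdsLT_of_mem (right_mem_Ioc.mpr hyd)] with z hz
  have hzI : z ∈ Ioo c d := ⟨hx.1.trans (hyx.trans_lt hz.1), hz.2⟩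
  rw [slope_comm f x z, slope_comm f y z]
  exact hcvx.slope_mono hzI ⟨hx, ne_of_lt (hyx.trans_lt hz.1)⟩ ⟨hy, ne_of_lt hz.1⟩ hyx

lemma E1 (hcvx : ConvexOn ℝ (Ioo c d) f) (hc : ContinuousAt f c)
    (hdc : DifferentiableAt ℝ f c) (hx : x ∈ Ioo c d) : deriv f c ≤ slope f c x := by
  refine le_of_tendsto (tendsto_slope_right hdc) ?_
  filter_upwards [Ioo_mem_nhdsGT_of_mem (left_mem_Ico.mpr hx.1)] with y hy
  exact slope_endpoint_mono hcvx hc ⟨hy.1, hy.2.trans hx.2⟩ hx hy.2.le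

lemma E2 (hcvx : ConvexOn ℝ (Ioo c d) f) (hd : ContinuousAt f d)
    (hdd : DifferentiableAt ℝ f d) (hx : x ∈ Ioo c d) : slope f x d ≤ deriv f d := by
  have : Tendsto (fun y => slope f y d) (𝓝[<] d) (𝓝 (deriv f d)) :=
    (tendsto_slope_left hdd).congr (fun y => slope_comm f d y)
  refine ge_of_tendsto this ?_
  filter_upwards [Ioo_mem_nhdsLT_of_mem (right_mem_Ioc.mpr hx.2)] with y hy
  exact slope_endpoint_mono' hcvx hd ⟨hx.1.trans hy.1, hy.2⟩ hx hy.1.le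

lemma E3a (hcvx : ConvexOn ℝ (Ioo c d) f) (hd : ContinuousAt f d)
    (ht : t ∈ Ioo c d) (hdt : DifferentiableAt ℝ f t) : deriv f t ≤ slope f t d := by
  have lim : Tendsto (fun z => slope f t z) (𝓝[<] d) (𝓝 (slope f t d)) := by
    simp only [slope_def_field]
    apply Tendsto.div
    · exact (hd.tendsto.mono_left nhdsWithin_le_nhds).sub tendsto_const_nhds
    · exact (tendsto_id.mono_left nhdsWithin_le_nhds).sub tendsto_const_nhds
    · exact sub_ne_zero.mpr (ne_of_gt ht.2)
  refine ge_of_tendsto lim ?_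
  filter_upwards [Ioo_mem_nhdsLT_of_mem (right_mem_Ioc.mpr ht.2)] with z hz
  exact hcvx.deriv_le_slope ht ⟨ht.1.trans hz.1, hz.2⟩ hz.1 hdt

lemma E4a (hcvx : ConvexOn ℝ (Ioo c d) f) (hc : ContinuousAt f c)
    (ht : t ∈ Ioo c d) (hdt : DifferentiableAt ℝ f t) : slope f c t ≤ deriv f t := by
  have lim : Tendsto (fun z => slope f z t) (𝓝[>] c) (𝓝 (slope f c t)) := by
    simp only [slope_comm f _ t, slope_def_field]
    apply Tendsto.div
    · exact (hc.tendsto.mono_left nhdsWithin_le_nhds).sub tendsto_const_nhds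
    · exact (tendsto_id.mono_left nhdsWithin_le_nhds).sub tendsto_const_nhds
    · exact sub_ne_zero.mpr (ne_of_lt ht.1)
  refine le_of_tendsto lim ?_
  filter_upwards [Ioo_mem_nhdsGT_of_mem (left_mem_Ico.mpr ht.1)] with z hz
  exact hcvx.slope_le_deriv ⟨hz.1, hz.2.trans ht.2⟩ ht hz.2 hdt

variable {f : ℝ → ℝ} {J : Set ℝ} {c d t x : ℝ}

/-- A point which has a punctured neighbourhood strictly below the tangent line cannot be the
left endpoint of an interval of convexity. -/
lemma ECl (hcd : c < d) (hcvx : ConvexOn ℝ (Ioo c d) f)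
    (hdc : DifferentiableAt ℝ f c) (hB : OneB f J c) : False := by
  obtain ⟨δ, hδ, -, hneg⟩ := hB
  set x := c + min δ (d - c) / 2 with hxdef
  have hmin : 0 < min δ (d - c) := lt_min hδ (by linarith)
  have hcx : c < x := by simp only [hxdef]; linarith
  have hxd : x < d := by
    have : min δ (d - c) ≤ d - c := min_le_right _ _
    simp only [hxdef]; linarith
  have hxw : x ∈ Ioo (c - δ) (c + δ) := by
    constructor
    · simp only [hxdef]; linarith
    · have : min δ (d - c) ≤ δ := min_le_left _ _
      simp only [hxdef]; linarith
  have h1 : Dv f c x < 0 := hneg x hxw (ne_of_gt hcx)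
  have h2 : deriv f c ≤ slope f c x := E1 hcvx hdc.continuousAt hdc ⟨hcx, hxd⟩
  rw [slope_def_field] at h2
  rw [le_div_iff₀ (by linarith : (0:ℝ) < x - c)] at h2
  simp only [Dv] at h1
  nlinarith

/-- ... nor the right endpoint. -/
lemma ECr (hcd : c < d) (hcvx : ConvexOn ℝ (Ioo c d) f)
    (hdd : DifferentiableAt ℝ f d) (hB : OneB f J d) : False := by
  obtain ⟨δ, hδ, -, hneg⟩ := hB
  set x := d - min δ (d - c) / 2 with hxdef
  have hmin : 0 < min δ (d - c) := lt_min hδ (by linarith)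
  have hxd : x < d := by simp only [hxdef]; linarith
  have hcx : c < x := by
    have : min δ (d - c) ≤ d - c := min_le_right _ _
    simp only [hxdef]; linarith
  have hxw : x ∈ Ioo (d - δ) (d + δ) := by
    constructor
    · have : min δ (d - c) ≤ δ := min_le_left _ _
      simp only [hxdef]; linarith
    · simp only [hxdef]; linarith
  have h1 : Dv f d x < 0 := hneg x hxw (ne_of_lt hxd)
  have h2 : slope f x d ≤ deriv f d := E2 hcvx hdd.continuousAt hdd ⟨hcx, hxd⟩
  rw [slope_def_field, div_le_iff₀ (by linarith : (0:ℝ) < d - x)] at h2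
  simp only [Dv] at h1
  nlinarith

/-- `f` is affine near `t` contradicts the one-sided tangent condition. -/
lemma aff_contra {ε : ℝ} (hε : 0 < ε)
    (haff : ∀ y ∈ Ioo (t - ε) (t + ε), Dv f t y = 0)
    (hSt : OneA f J t ∨ OneB f J t) : False := by
  have key : ∀ δ > 0, ∃ y, y ∈ Ioo (t - δ) (t + δ) ∧ y ≠ t ∧ Dv f t y = 0 := by
    intro δ hδ
    have h0 : 0 < min δ ε := lt_min hδ hε
    have l1 : min δ ε ≤ δ := min_le_left _ _
    have l2 : min δ ε ≤ ε := min_le_right _ _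
    refine ⟨t + min δ ε / 2, mem_Ioo.mpr ⟨by linarith, by linarith⟩,
      ne_of_gt (by linarith), haff _ (mem_Ioo.mpr ⟨by linarith, by linarith⟩)⟩
  rcases hSt with ⟨δ, hδ, -, hpos⟩ | ⟨δ, hδ, -, hneg⟩
  · obtain ⟨y, hy, hyt, h0⟩ := key δ hδ
    have := hpos y hy hyt; rw [h0] at this; exact lt_irrefl 0 this
  · obtain ⟨y, hy, hyt, h0⟩ := key δ hδ
    have := hneg y hy hyt; rw [h0] at this; exact lt_irrefl 0 this



lemma locCcv_neg (h : LocCcv f J t) : LocCvx (fun x => -f x) J t := by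
  obtain ⟨ε, hε, hsub, hcc⟩ := h
  exact ⟨ε, hε, hsub, neg_convexOn_iff.mpr hcc⟩

lemma locCvx_neg (h : LocCvx f J t) : LocCcv (fun x => -f x) J t := by
  obtain ⟨ε, hε, hsub, hcc⟩ := h
  exact ⟨ε, hε, hsub, neg_concaveOn_iff.mpr hcc⟩

lemma locCvx_oneB_false (h : LocCvx f J t) (hd : DifferentiableAt ℝ f t)
    (hB : OneB f J t) : False := by
  obtain ⟨ε, hε, -, hcvx⟩ := h
  obtain ⟨δ, hδ, -, hneg⟩ := hB
  have h0 : 0 < min δ ε := lt_min hδ hε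
  set y := t + min δ ε / 2 with hydef
  have hymem : y ∈ Ioo (t - ε) (t + ε) := by
    have : min δ ε ≤ ε := min_le_right _ _
    constructor <;> simp only [hydef] <;> linarith
  have hyw : y ∈ Ioo (t - δ) (t + δ) := by
    have : min δ ε ≤ δ := min_le_left _ _
    constructor <;> simp only [hydef] <;> linarith
  have hyt : y ≠ t := ne_of_gt (by simp only [hydef]; linarith)
  have h1 : Dv f t y < 0 := hneg y hyw hyt
  have h2 := tangent_le hcvx (show t ∈ Ioo (t-ε) (t+ε) by constructor <;> linarith) hymem hd
  simp only [Dv] at h1; linarith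

lemma locCcv_oneA_false (h : LocCcv f J t) (hd : DifferentiableAt ℝ f t)
    (hA : OneA f J t) : False := by
  refine locCvx_oneB_false (locCcv_neg h) hd.neg ?_
  obtain ⟨δ, hδ, hsub, hpos⟩ := hA
  refine ⟨δ, hδ, hsub, fun s hs hst => ?_⟩
  have : Dv (fun x => -f x) t s = - Dv f t s := by simp [Dv, deriv.neg]; ring
  rw [this]; linarith [hpos s hs hst]

lemma locCvx_locCcv_false (h1 : LocCvx f J t) (h2 : LocCcv f J t)
    (hd : DifferentiableAt ℝ f t) (hSt : OneA f J t ∨ OneB f J t) : False := by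
  obtain ⟨ε1, hε1, -, hcvx⟩ := h1
  obtain ⟨ε2, hε2, -, hccv⟩ := h2
  set ε := min ε1 ε2 with hεdef
  have hε : 0 < ε := lt_min hε1 hε2
  have htm : t ∈ Ioo (t - ε) (t + ε) := by constructor <;> linarith
  refine aff_contra hε (fun y hy => ?_) hSt
  have hy1 : y ∈ Ioo (t - ε1) (t + ε1) := by
    obtain ⟨a, b⟩ := hy
    have l1 : ε ≤ ε1 := min_le_left _ _
    constructor <;> linarith
  have hy2 : y ∈ Ioo (t - ε2) (t + ε2) := by
    obtain ⟨a, b⟩ := hy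
    have l2 : ε ≤ ε2 := min_le_right _ _
    constructor <;> linarith
  have t1 : t ∈ Ioo (t - ε1) (t + ε1) := by constructor <;> linarith
  have t2 : t ∈ Ioo (t - ε2) (t + ε2) := by constructor <;> linarith
  have hle := tangent_le hcvx t1 hy1 hd
  have hccv' : ConvexOn ℝ (Ioo (t - ε2) (t + ε2)) (fun x => -f x) := neg_convexOn_iff.mpr hccv
  have hge0 := tangent_le hccv' t2 hy2 hd.neg
  have hge : -f t + -(deriv f t) * (y - t) ≤ -f y := by
    simpa only [deriv.fun_neg] using hge0
  simp only [Dv]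
  linarith

lemma reach_limit {f : ℝ → ℝ} {v w t : ℝ}
    (hdiff : ∀ x ∈ Ioo v w, DifferentiableAt ℝ f x)
    {Q : Set ℝ}
    (hQ : ∀ q ∈ Q, q ∈ Ioo v w ∧ ∀ x ∈ Ioo v w, x ≠ q → 0 < Dv f q x)
    (htc : t ∈ closure Q) (htm : t ∈ Ioo v w) :
    ∀ x ∈ Ioo v w, 0 ≤ Dv f t x := by
  intro x hx
  by_cases hxt : x = t
  · subst hxt; simp [Dv]
  by_cases htQ : t ∈ Q
  · exact le_of_lt ((hQ t htQ).2 x hx hxt)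
  have hne : (𝓝[Q] t).NeBot := mem_closure_iff_nhdsWithin_neBot.mp htc
  set L := 𝓝[Q] t with hLdef
  have hLn : L ≤ 𝓝 t := nhdsWithin_le_nhds
  have hLQ : ∀ᶠ q in L, q ∈ Q := self_mem_nhdsWithin
  have hQne : ∀ᶠ q in L, q ≠ t := hLQ.mono (fun q hq h => htQ (h ▸ hq))
  have hQsub : Q ⊆ {t}ᶜ := fun q hq (h : q = t) => htQ (h ▸ hq)
  have hLner : L ≤ 𝓝[≠] t := nhdsWithin_mono t hQsub
  have hdA : Tendsto (slope f t) (𝓝[≠] t) (𝓝 (deriv f t)) :=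
    hasDerivAt_iff_tendsto_slope.mp (hdiff t htm).hasDerivAt
  have A : Tendsto (fun q => slope f t q) L (𝓝 (deriv f t)) := hdA.mono_left hLner
  -- the auxiliary reflected point `2q - t`
  have hg0 : Tendsto (fun q : ℝ => 2*q - t) L (𝓝 t) := by
    have : Tendsto (fun q : ℝ => 2*q - t) (𝓝 t) (𝓝 (2*t - t)) := by
      exact ((continuous_const.mul continuous_id).sub continuous_const).tendsto t
    rw [show (2:ℝ)*t - t = t by ring] at this
    exact this.mono_left hLn
  have hg : Tendsto (fun q : ℝ => 2*q - t) L (𝓝[≠] t) := by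
    rw [tendsto_nhdsWithin_iff]
    exact ⟨hg0, hQne.mono (fun q hq (h : 2*q - t = t) => hq (by linarith))⟩
  have B0 : Tendsto (fun q => slope f t (2*q - t)) L (𝓝 (deriv f t)) := hdA.comp hg
  have B : Tendsto (fun q => 2 * slope f t (2*q - t) - slope f t q) L
      (𝓝 (deriv f t)) := by
    have := (B0.const_mul 2).sub A
    rw [show 2 * deriv f t - deriv f t = deriv f t by ring] at this
    exact this
  have hminT : Tendsto (fun q => min (slope f t q) (2 * slope f t (2*q - t) - slope f t q)) L
      (𝓝 (deriv f t)) := by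
    have := A.min B
    rwa [min_self] at this
  have hmaxT : Tendsto (fun q => max (slope f t q) (2 * slope f t (2*q - t) - slope f t q)) L
      (𝓝 (deriv f t)) := by
    have := A.max B
    rwa [max_self] at this
  have hgmem : ∀ᶠ q in L, (2*q - t) ∈ Ioo v w := hg0.eventually (isOpen_Ioo.eventually_mem htm)
  have hqmem : ∀ᶠ q in L, q ∈ Ioo v w := (isOpen_Ioo.eventually_mem htm).filter_mono hLn
  have hbound : ∀ᶠ q in L,
      min (slope f t q) (2 * slope f t (2*q - t) - slope f t q) ≤ deriv f q ∧
      deriv f q ≤ max (slope f t q) (2 * slope f t (2*q - t) - slope f t q) := by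
    filter_upwards [hLQ, hQne, hgmem, hqmem] with q hq hqt hgq hqm
    have reach := (hQ q hq).2
    have e1 : 0 < Dv f q t := reach t htm (Ne.symm hqt)
    have e2 : 0 < Dv f q (2*q - t) := reach _ hgq (fun h => hqt (by linarith))
    simp only [Dv] at e1 e2
    have hqt' : q - t ≠ 0 := sub_ne_zero.mpr hqt
    have hBq : 2 * slope f t (2*q - t) - slope f t q = (f (2*q - t) - f q)/(q - t) := by
      rw [slope_def_field, slope_def_field, show (2*q - t) - t = 2*(q-t) by ring]
      field_simp [hqt']
      ring
    have hAq : slope f t q = (f q - f t)/(q - t) := slope_def_field f t q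
    rcases lt_or_gt_of_ne hqt with hlt | hgt
    · -- q < t : B q < deriv f q < slope f t q
      have hd1 : deriv f q < (f q - f t)/(q - t) := by
        rw [lt_div_iff_of_neg (by linarith : q - t < 0)]
        nlinarith [e1]
      have hd2 : (f (2*q - t) - f q)/(q - t) < deriv f q := by
        rw [div_lt_iff_of_neg (by linarith : q - t < 0)]
        nlinarith [e2]
      rw [hBq, hAq]
      constructor
      · exact le_trans (min_le_right _ _) (le_of_lt hd2)
      · exact le_trans (le_of_lt hd1) (le_max_left _ _)
    · -- t < q : slope f t q < deriv f q < B q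
      have hd1 : (f q - f t)/(q - t) < deriv f q := by
        rw [div_lt_iff₀ (by linarith : (0:ℝ) < q - t)]
        nlinarith [e1]
      have hd2 : deriv f q < (f (2*q - t) - f q)/(q - t) := by
        rw [lt_div_iff₀ (by linarith : (0:ℝ) < q - t)]
        nlinarith [e2]
      rw [hBq, hAq]
      constructor
      · exact le_trans (min_le_left _ _) (le_of_lt hd1)
      · exact le_trans (le_of_lt hd2) (le_max_right _ _)
  have C : Tendsto (fun q => deriv f q) L (𝓝 (deriv f t)) :=
    tendsto_of_tendsto_of_tendsto_of_le_of_le' hminT hmaxT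
      (hbound.mono (fun q h => h.1)) (hbound.mono (fun q h => h.2))
  have hfc : Tendsto (fun q => f q) L (𝓝 (f t)) :=
    ((hdiff t htm).continuousAt.tendsto).mono_left hLn
  have hφ : Tendsto (fun q => f q + deriv f q * (x - q)) L
      (𝓝 (f t + deriv f t * (x - t))) := by
    refine hfc.add (C.mul ?_)
    exact tendsto_const_nhds.sub (tendsto_id.mono_left hLn)
  have hqnex : ∀ᶠ q in L, q ≠ x := by
    have : ∀ᶠ q in 𝓝 t, q ≠ x :=
      (isOpen_compl_singleton).eventually_mem (fun h => hxt (by simpa using h.symm))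
    exact this.filter_mono hLn
  have hev : ∀ᶠ q in L, f q + deriv f q * (x - q) ≤ f x := by
    filter_upwards [hLQ, hqnex] with q hq hqx
    have := (hQ q hq).2 x hx (fun h => hqx h.symm)
    simp only [Dv] at this
    linarith
  have := le_of_tendsto hφ hev
  simp only [Dv]; linarith

/-- Local convexity plus nowhere-affineness implies convexity on an interval. -/
lemma convexOn_of_local {f : ℝ → ℝ} {c d : ℝ}
    (hdiff : ∀ t ∈ Ioo c d, DifferentiableAt ℝ f t)
    (hloc : ∀ t ∈ Ioo c d, ∃ ε > 0, Ioo (t-ε) (t+ε) ⊆ Ioo c d ∧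
      ConvexOn ℝ (Ioo (t-ε) (t+ε)) f)
    (haff : ∀ t ∈ Ioo c d, ¬ ∃ ε > 0, ∀ y ∈ Ioo (t-ε) (t+ε), Dv f t y = 0) :
    ConvexOn ℝ (Ioo c d) f := by
  have key : ∀ x z, x ∈ Ioo c d → z ∈ Ioo c d → x < z → ∀ y ∈ Icc x z,
      f y ≤ f x + (f z - f x)/(z-x) * (y - x) := by
    intro x z hx hz hxz
    have hzx : z - x ≠ 0 := sub_ne_zero.mpr (ne_of_gt hxz)
    obtain ⟨K, hKdef⟩ : ∃ K : ℝ, K = (f z - f x)/(z-x) := ⟨_, rfl⟩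
    have hKz : K * (z - x) = f z - f x := by rw [hKdef]; field_simp
    rw [← hKdef]
    set F : ℝ → ℝ := fun y => f y - (f x + K*(y-x)) with hFdef
    have hsub : Icc x z ⊆ Ioo c d := fun y hy => ⟨hx.1.trans_le hy.1, hy.2.trans_lt hz.2⟩
    have hFcont : ContinuousOn F (Icc x z) := by
      apply ContinuousOn.sub
      · exact fun y hy => ((hdiff y (hsub hy)).continuousAt).continuousWithinAt
      · exact (continuous_const.add
          (continuous_const.mul (continuous_id.sub continuous_const))).continuousOn
    obtain ⟨m, hmIcc, hmax⟩ := isCompact_Icc.exists_isMaxOn (nonempty_Icc.mpr hxz.le) hFcont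
    have hFx : F x = 0 := by simp [hFdef]
    have hFz : F z = 0 := by simp only [hFdef]; linarith [hKz]
    have hFm : F m ≤ 0 := by
      by_contra hpos
      push_neg at hpos
      have hmx : m ≠ x := fun h => by rw [h, hFx] at hpos; exact lt_irrefl 0 hpos
      have hmz : m ≠ z := fun h => by rw [h, hFz] at hpos; exact lt_irrefl 0 hpos
      have hmIoo : m ∈ Ioo x z := ⟨lt_of_le_of_ne hmIcc.1 (Ne.symm hmx), lt_of_le_of_ne hmIcc.2 hmz⟩
      have hmcd : m ∈ Ioo c d := hsub hmIcc
      obtain ⟨ε, hε, hballsub, hcvx⟩ := hloc m hmcd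
      set ρ := min ε (min (m - x) (z - m)) with hρdef
      have hρ : 0 < ρ := lt_min hε (lt_min (by linarith [hmIoo.1]) (by linarith [hmIoo.2]))
      have habs : ∀ A B C : ℝ, A ≤ C → B ≤ C → C ≤ 1/2*A + 1/2*B → A = C ∧ B = C := by
        intro A B C h1 h2 h3; constructor <;> linarith
      have hconst : ∀ r, 0 < r → r < ρ → F (m-r) = F m ∧ F (m+r) = F m := by
        intro r hr hrρ
        have hrε : r < ε := lt_of_lt_of_le hrρ (by rw [hρdef]; exact min_le_left _ _)
        have hrmx : r < m - x := lt_of_lt_of_le hrρ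
          (by rw [hρdef]; exact (min_le_right _ _).trans (min_le_left _ _))
        have hrzm : r < z - m := lt_of_lt_of_le hrρ
          (by rw [hρdef]; exact (min_le_right _ _).trans (min_le_right _ _))
        have hu : m - r ∈ Ioo (m-ε) (m+ε) := ⟨by linarith, by linarith⟩
        have hv : m + r ∈ Ioo (m-ε) (m+ε) := ⟨by linarith, by linarith⟩
        have huI : m - r ∈ Icc x z := ⟨by linarith, by linarith⟩
        have hvI : m + r ∈ Icc x z := ⟨by linarith, by linarith⟩
        have hmid0 := hcvx.2 hu hv (by norm_num : (0:ℝ) ≤ 1/2) (by norm_num : (0:ℝ) ≤ 1/2)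
          (by norm_num : (1:ℝ)/2 + 1/2 = 1)
        have hmm : (1/2 : ℝ) • (m - r) + (1/2 : ℝ) • (m + r) = m := by
          simp only [smul_eq_mul]; ring
        rw [hmm] at hmid0
        simp only [smul_eq_mul] at hmid0
        have h1 : F (m - r) ≤ F m := hmax huI
        have h2 : F (m + r) ≤ F m := hmax hvI
        have hFsum : F m ≤ 1/2 * F (m-r) + 1/2 * F (m+r) := by
          have hl : (1:ℝ)/2 * (f x + K*((m-r)-x)) + 1/2 * (f x + K*((m+r)-x))
              = f x + K*(m-x) := by ring
          simp only [hFdef]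
          linarith [hmid0, hl]
        exact habs _ _ _ h1 h2 hFsum
      have haffm : ∀ y ∈ Ioo (m-ρ) (m+ρ), f y = f m + K*(y-m) := by
        intro y hy
        rcases lt_trichotomy y m with hym | hym | hym
        · have h := (hconst (m - y) (by linarith) (by linarith [hy.1])).1
          rw [show m - (m - y) = y by ring] at h
          simp only [hFdef] at h
          have hKlin : K*(y-x) - K*(m-x) = K*(y-m) := by ring
          linarith [h, hKlin]
        · rw [hym]; ring
        · have h := (hconst (y - m) (by linarith) (by linarith [hy.2])).2
          rw [show m + (y - m) = y by ring] at h
          simp only [hFdef] at h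
          have hKlin : K*(y-x) - K*(m-x) = K*(y-m) := by ring
          linarith [h, hKlin]
      have hda : HasDerivAt (fun y => f m + K*(y-m)) K m := by
        have := (((hasDerivAt_id m).sub_const m).const_mul K).const_add (f m)
        simpa using this
      have hder : HasDerivAt f K m := by
        refine hda.congr_of_eventuallyEq ?_
        filter_upwards [Ioo_mem_nhds (by linarith : m - ρ < m) (by linarith : m < m + ρ)] with y hy
        exact haffm y hy
      refine haff m hmcd ⟨ρ, hρ, fun y hy => ?_⟩
      simp only [Dv, hder.deriv]
      rw [haffm y hy]; ring
    intro y hy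
    have hFy : F y ≤ F m := hmax hy
    simp only [hFdef] at hFy hFm
    linarith
  refine ⟨convex_Ioo c d, ?_⟩
  intro x hx z hz a b ha hb hab
  rcases eq_or_lt_of_le ha with ha0 | ha0
  · have hb1 : b = 1 := by linarith
    simp [← ha0, hb1]
  rcases eq_or_lt_of_le hb with hb0 | hb0
  · have ha1 : a = 1 := by linarith
    simp [← hb0, ha1]
  have hb' : b = 1 - a := by linarith
  subst hb'
  have ha1 : a < 1 := by linarith
  rcases lt_trichotomy x z with hxz | hxz | hxz
  · have hzx : z - x ≠ 0 := sub_ne_zero.mpr (ne_of_gt hxz)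
    have hy : a • x + (1-a) • z ∈ Icc x z := by
      simp only [smul_eq_mul]
      constructor <;> nlinarith
    have h := key x z hx hz hxz _ hy
    have hexp : f x + (f z - f x)/(z-x) * ((a • x + (1-a) • z) - x)
        = a • f x + (1-a) • f z := by
      simp only [smul_eq_mul]
      field_simp
      ring
    rw [hexp] at h
    exact h
  · subst hxz
    have hyy : a • x + (1-a) • x = x := by simp only [smul_eq_mul]; ring
    rw [hyy]
    simp only [smul_eq_mul]; nlinarith
  · have hzx : x - z ≠ 0 := sub_ne_zero.mpr (ne_of_gt hxz)
    have hy : a • x + (1-a) • z ∈ Icc z x := by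
      simp only [smul_eq_mul]
      constructor <;> nlinarith
    have h := key z x hz hx hxz _ hy
    have hexp : f z + (f x - f z)/(x-z) * ((a • x + (1-a) • z) - z)
        = a • f x + (1-a) • f z := by
      simp only [smul_eq_mul]
      field_simp
      ring
    rw [hexp] at h
    exact h

lemma baire_dense {K : Set ℝ} (hK : IsCompact K) (hne : K.Nonempty) (T : ℕ → Set ℝ)
    (hcover : K ⊆ ⋃ n, T n) :
    ∃ n t₀ r, t₀ ∈ K ∧ 0 < r ∧
      ∀ s ∈ K ∩ Ioo (t₀ - r) (t₀ + r), s ∈ closure (T n ∩ K) := by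
  haveI : Nonempty K := hne.to_subtype
  haveI : CompleteSpace K := hK.isClosed.completeSpace_coe
  set A : ℕ → Set K := fun n => Subtype.val ⁻¹' (T n ∩ K) with hAdef
  have hU : (⋃ n, closure (A n)) = univ := by
    apply eq_univ_of_univ_subset
    rintro ⟨k, hk⟩ -
    obtain ⟨n, hn⟩ := mem_iUnion.mp (hcover hk)
    exact mem_iUnion.mpr ⟨n, subset_closure (by exact ⟨hn, hk⟩)⟩
  obtain ⟨n, x, hx⟩ := nonempty_interior_of_iUnion_of_closed
    (fun n => isClosed_closure (s := A n)) hU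
  rw [mem_interior_iff_mem_nhds] at hx
  obtain ⟨r, hr, hball⟩ := Metric.mem_nhds_iff.mp hx
  refine ⟨n, x.1, r, x.2, hr, ?_⟩
  intro s hs
  have hsK : s ∈ K := hs.1
  have hdist : (⟨s, hsK⟩ : K) ∈ Metric.ball x r := by
    rw [Metric.mem_ball, Subtype.dist_eq, Real.dist_eq, abs_sub_lt_iff]
    obtain ⟨h1, h2⟩ := hs.2
    constructor <;> linarith
  have hmem := hball hdist
  rw [Topology.IsEmbedding.subtypeVal.closure_eq_preimage_closure_image] at hmem
  refine closure_mono ?_ hmem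
  rintro y ⟨⟨y', hy'⟩, hy'A, rfl⟩
  exact hy'A

variable {f : ℝ → ℝ} {J : Set ℝ}

lemma locCvx_mem (h : LocCvx f J t) : t ∈ J := by
  obtain ⟨ε, hε, hsub, -⟩ := h
  exact hsub ⟨by linarith, by linarith⟩

lemma locCcv_mem (h : LocCcv f J t) : t ∈ J := by
  obtain ⟨ε, hε, hsub, -⟩ := h
  exact hsub ⟨by linarith, by linarith⟩

lemma isOpen_locCvx : IsOpen {t | LocCvx f J t} := by
  rw [Metric.isOpen_iff]
  rintro t ⟨ε, hε, hsub, hcvx⟩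
  refine ⟨ε/2, by linarith, ?_⟩
  intro t' ht'
  rw [Metric.mem_ball, Real.dist_eq, abs_sub_lt_iff] at ht'
  refine ⟨ε/2, by linarith, ?_, ?_⟩
  · intro y hy
    exact hsub ⟨by linarith [hy.1, ht'.1, ht'.2], by linarith [hy.2, ht'.1, ht'.2]⟩
  · refine hcvx.subset ?_ (convex_Ioo _ _)
    intro y hy
    exact ⟨by linarith [hy.1, ht'.1, ht'.2], by linarith [hy.2, ht'.1, ht'.2]⟩

lemma isOpen_locCcv : IsOpen {t | LocCcv f J t} := by
  rw [Metric.isOpen_iff]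
  rintro t ⟨ε, hε, hsub, hcvx⟩
  refine ⟨ε/2, by linarith, ?_⟩
  intro t' ht'
  rw [Metric.mem_ball, Real.dist_eq, abs_sub_lt_iff] at ht'
  refine ⟨ε/2, by linarith, ?_, ?_⟩
  · intro y hy
    exact hsub ⟨by linarith [hy.1, ht'.1, ht'.2], by linarith [hy.2, ht'.1, ht'.2]⟩
  · refine hcvx.subset ?_ (convex_Ioo _ _)
    intro y hy
    exact ⟨by linarith [hy.1, ht'.1, ht'.2], by linarith [hy.2, ht'.1, ht'.2]⟩

/-- closure points (inside `J`) of subsets of `Kset` belong to `Kset`. -/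
lemma kset_closure {s : Set ℝ} (hs : s ⊆ Kset f J) {y : ℝ}
    (hy : y ∈ closure s) (hyJ : y ∈ J) : y ∈ Kset f J := by
  have hG : IsOpen ({t | LocCvx f J t} ∪ {t | LocCcv f J t}) :=
    isOpen_locCvx.union isOpen_locCcv
  have hsub : s ⊆ ({t | LocCvx f J t} ∪ {t | LocCcv f J t})ᶜ := by
    intro z hz
    intro hzG
    rcases hzG with h | h
    · exact (hs hz).2.1 h
    · exact (hs hz).2.2 h
  have : y ∈ ({t | LocCvx f J t} ∪ {t | LocCcv f J t})ᶜ :=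
    (hG.isClosed_compl.closure_subset_iff.mpr hsub) hy
  rw [mem_compl_iff, mem_union] at this
  push_neg at this
  exact ⟨hyJ, this.1, this.2⟩

theorem core (f : ℝ → ℝ) (J : Set ℝ)
    (hdiff : ∀ t ∈ J, DifferentiableAt ℝ f t)
    (hS : ∀ t ∈ J, OneA f J t ∨ OneB f J t)
    (n : ℕ) (v w t₀ : ℝ) (hvw : v < w) (hsub : Icc v w ⊆ J)
    (hlen : w - v ≤ 1/(n+1))
    (ht₀ : t₀ ∈ Kset f J ∩ Ioo v w)
    (hdense : ∀ s ∈ Kset f J ∩ Ioo v w, s ∈ closure (An f n ∩ Ioo v w)) : False := by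
  have hIoosub : Ioo v w ⊆ J := fun y hy => hsub ⟨hy.1.le, hy.2.le⟩
  have hdiffI : ∀ x ∈ Ioo v w, DifferentiableAt ℝ f x := fun x hx => hdiff x (hIoosub hx)
  have hQ : ∀ q ∈ An f n ∩ Ioo v w,
      q ∈ Ioo v w ∧ ∀ x ∈ Ioo v w, x ≠ q → 0 < Dv f q x := by
    rintro q ⟨hqA, hqI⟩
    refine ⟨hqI, fun x hxI hxq => hqA x hxq ?_⟩
    rw [abs_sub_lt_iff]
    constructor <;> linarith [hqI.1, hqI.2, hxI.1, hxI.2]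
  have weak : ∀ t ∈ Kset f J ∩ Ioo v w, ∀ x ∈ Ioo v w, 0 ≤ Dv f t x :=
    fun t ht x hx => reach_limit hdiffI hQ (hdense t ht) ht.2 x hx
  have weak' : ∀ t ∈ Kset f J ∩ Ioo v w, ∀ x ∈ Ioo v w,
      f t + deriv f t * (x - t) ≤ f x := by
    intro t ht x hx
    have := weak t ht x hx
    simp only [Dv] at this
    linarith
  have hOneA : ∀ t ∈ Kset f J ∩ Ioo v w, OneA f J t := by
    intro t ht
    rcases hS t (hIoosub ht.2) with h | h
    · exact h
    · exfalso
      obtain ⟨δ, hδ, hsubδ, hneg⟩ := h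
      have h0 : 0 < min δ (w - t) := lt_min hδ (by linarith [ht.2.2])
      have l1 : min δ (w - t) ≤ δ := min_le_left _ _
      have l2 : min δ (w - t) ≤ w - t := min_le_right _ _
      set y := t + min δ (w - t) / 2 with hydef
      have hyI : y ∈ Ioo v w := ⟨by simp only [hydef]; linarith [ht.2.1], by
        simp only [hydef]; linarith⟩
      have hyw : y ∈ Ioo (t - δ) (t + δ) := ⟨by simp only [hydef]; linarith, by
        simp only [hydef]; linarith⟩
      have hne : y ≠ t := ne_of_gt (by simp only [hydef]; linarith)
      have := hneg y hyw hne
      linarith [weak t ht y hyI]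
  -- key tangent estimate on (v,w)
  have htang : ∀ t ∈ Ioo v w, ∀ x ∈ Ioo v w, f t + deriv f t * (x - t) ≤ f x := by
    intro t htI x hxI
    by_cases htK : t ∈ Kset f J
    · exact weak' t ⟨htK, htI⟩ x hxI
    -- gap construction
    have hvt : v < t := htI.1
    have htw : t < w := htI.2
    set S1 : Set ℝ := insert v (Kset f J ∩ Ioo v t) with hS1def
    set S2 : Set ℝ := insert w (Kset f J ∩ Ioo t w) with hS2def
    have hS1ne : S1.Nonempty := ⟨v, mem_insert _ _⟩
    have hS2ne : S2.Nonempty := ⟨w, mem_insert _ _⟩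
    have hS1bdd : BddAbove S1 := by
      refine ⟨t, ?_⟩
      rintro s (rfl | hs)
      · exact hvt.le
      · exact hs.2.2.le
    have hS2bdd : BddBelow S2 := by
      refine ⟨t, ?_⟩
      rintro s (rfl | hs)
      · exact htw.le
      · exact hs.2.1.le
    set c := sSup S1 with hcdef
    set d := sInf S2 with hddef
    have hvc : v ≤ c := le_csSup hS1bdd (mem_insert _ _)
    have hdw : d ≤ w := csInf_le hS2bdd (mem_insert _ _)
    have hct : c ≤ t := by
      apply csSup_le hS1ne
      rintro s (rfl | hs)
      · exact hvt.le
      · exact hs.2.2.le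
    have htd : t ≤ d := by
      apply le_csInf hS2ne
      rintro s (rfl | hs)
      · exact htw.le
      · exact hs.2.1.le
    have hcJ : c ∈ J := hsub ⟨hvc, hct.trans htw.le⟩
    have hdJ : d ∈ J := hsub ⟨hvt.le.trans htd, hdw⟩
    have hcK : c ≠ v → c ∈ Kset f J := by
      intro hcv
      have hXne : (Kset f J ∩ Ioo v t).Nonempty := by
        by_contra hemp
        rw [not_nonempty_iff_eq_empty] at hemp
        rw [hS1def, hemp] at hcdef
        simp at hcdef
        exact hcv hcdef
      have hXbdd : BddAbove (Kset f J ∩ Ioo v t) := by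
        refine ⟨t, fun s hs => hs.2.2.le⟩
      have hcsup : c = sSup (Kset f J ∩ Ioo v t) := by
        rw [hcdef, hS1def, csSup_insert hXbdd hXne]
        rcases le_or_gt (sSup (Kset f J ∩ Ioo v t)) v with h | h
        · exfalso
          apply hcv
          rw [hcdef, hS1def, csSup_insert hXbdd hXne]
          exact sup_eq_left.mpr h
        · exact sup_eq_right.mpr h.le
      rw [hcsup]
      exact kset_closure (fun s hs => hs.1) (csSup_mem_closure hXne hXbdd)
        (by rw [← hcsup]; exact hcJ)
    have hdK : d ≠ w → d ∈ Kset f J := by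
      intro hdw'
      have hXne : (Kset f J ∩ Ioo t w).Nonempty := by
        by_contra hemp
        rw [not_nonempty_iff_eq_empty] at hemp
        rw [hS2def, hemp] at hddef
        simp at hddef
        exact hdw' hddef
      have hXbdd : BddBelow (Kset f J ∩ Ioo t w) := ⟨t, fun s hs => hs.2.1.le⟩
      have hdinf : d = sInf (Kset f J ∩ Ioo t w) := by
        rw [hddef, hS2def, csInf_insert hXbdd hXne]
        rcases le_or_gt w (sInf (Kset f J ∩ Ioo t w)) with h | h
        · exfalso
          apply hdw'
          rw [hddef, hS2def, csInf_insert hXbdd hXne]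
          exact inf_eq_left.mpr h
        · exact inf_eq_right.mpr h.le
      rw [hdinf]
      exact kset_closure (fun s hs => hs.1) (csInf_mem_closure hXne hXbdd)
        (by rw [← hdinf]; exact hdJ)
    have hctlt : c < t := by
      rcases lt_or_eq_of_le hct with h | h
      · exact h
      · exfalso
        apply htK
        rw [← h]
        apply hcK
        intro hcv
        rw [hcv] at h
        exact absurd h (ne_of_lt hvt)
    have htdlt : t < d := by
      rcases lt_or_eq_of_le htd with h | h
      · exact h
      · exfalso
        apply htK
        rw [h]
        apply hdK
        intro hdw2
        rw [← h] at hdw2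
        exact absurd hdw2 (ne_of_lt htw)
    have hcd : c < d := hctlt.trans htdlt
    have hgapsub : Ioo c d ⊆ Ioo v w :=
      fun y hy => ⟨lt_of_le_of_lt hvc hy.1, lt_of_lt_of_le hy.2 hdw⟩
    have hgapK : ∀ y ∈ Ioo c d, y ∉ Kset f J := by
      intro y hy hyK
      rcases lt_trichotomy y t with h | h | h
      · have hyS : y ∈ S1 := Or.inr ⟨hyK, ⟨lt_of_le_of_lt hvc hy.1, h⟩⟩
        exact absurd (le_csSup hS1bdd hyS) (not_le.mpr hy.1)
      · exact htK (h ▸ hyK)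
      · have hyS : y ∈ S2 := Or.inr ⟨hyK, ⟨h, lt_of_lt_of_le hy.2 hdw⟩⟩
        exact absurd (csInf_le hS2bdd hyS) (not_le.mpr hy.2)
    have hgapG : Ioo c d ⊆ {t | LocCvx f J t} ∪ {t | LocCcv f J t} := by
      intro y hy
      by_contra hcon
      rw [mem_union] at hcon
      push_neg at hcon
      exact hgapK y hy ⟨hIoosub (hgapsub hy), hcon.1, hcon.2⟩
    have hdisjset : Disjoint {t | LocCvx f J t} {t | LocCcv f J t} := by
      rw [Set.disjoint_left]
      intro z hz1 hz2
      exact locCvx_locCcv_false hz1 hz2 (hdiff z (locCvx_mem hz1)) (hS z (locCvx_mem hz1))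
    have hshrink : ∀ y ∈ Ioo c d, ∀ ε, 0 < ε →
        ∃ ε' > 0, Ioo (y-ε') (y+ε') ⊆ Ioo c d ∧ Ioo (y-ε') (y+ε') ⊆ Ioo (y-ε) (y+ε) := by
      intro y hy ε hε
      refine ⟨min ε (min (y - c) (d - y)), ?_, ?_, ?_⟩
      · exact lt_min hε (lt_min (by linarith [hy.1]) (by linarith [hy.2]))
      · intro z hz
        have l1 : min ε (min (y - c) (d - y)) ≤ y - c := (min_le_right _ _).trans (min_le_left _ _)
        have l2 : min ε (min (y - c) (d - y)) ≤ d - y := (min_le_right _ _).trans (min_le_right _ _)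
        exact ⟨by linarith [hz.1], by linarith [hz.2]⟩
      · intro z hz
        have l0 : min ε (min (y - c) (d - y)) ≤ ε := min_le_left _ _
        exact ⟨by linarith [hz.1], by linarith [hz.2]⟩
    have hgapaff : ∀ y ∈ Ioo c d, ¬ ∃ ε > 0, ∀ z ∈ Ioo (y-ε) (y+ε), Dv f y z = 0 := by
      rintro y hy ⟨ε, hε, h0⟩
      exact aff_contra hε h0 (hS y (hIoosub (hgapsub hy)))
    rcases (isPreconnected_Ioo (a := c) (b := d)).subset_or_subset
        isOpen_locCvx isOpen_locCcv hdisjset hgapG with hGA | hGB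
    · -- the gap is an interval of convexity
      have hcvx : ConvexOn ℝ (Ioo c d) f := by
        apply convexOn_of_local (fun y hy => hdiffI y (hgapsub hy)) _ hgapaff
        intro y hy
        obtain ⟨ε, hε, hJsub, hc⟩ := hGA hy
        obtain ⟨ε', hε', hsub1, hsub2⟩ := hshrink y hy ε hε
        exact ⟨ε', hε', hsub1, hc.subset hsub2 (convex_Ioo _ _)⟩
      have htIoo : t ∈ Ioo c d := ⟨hctlt, htdlt⟩
      rcases lt_or_ge x d with hxd | hdx
      · rcases le_or_gt x c with hxc | hcx
        · -- x ≤ c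
          have hvclt : v < c := lt_of_lt_of_le hxI.1 hxc
          have hcKm : c ∈ Kset f J ∩ Ioo v w := ⟨hcK (ne_of_gt hvclt), hvclt, lt_of_le_of_lt hct htw⟩
          have hcCont : ContinuousAt f c := (hdiff c hcJ).continuousAt
          have h1 : slope f c t ≤ deriv f t := E4a hcvx hcCont htIoo (hdiffI t htI)
          have h2 : deriv f c ≤ deriv f t :=
            le_trans (E1 hcvx hcCont (hdiff c hcJ) htIoo) h1
          rw [slope_def_field, div_le_iff₀ (by linarith : (0:ℝ) < t - c)] at h1
          have h3 : f c + deriv f c * (x - c) ≤ f x := weak' c hcKm x hxI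
          have hmul : deriv f t * (x - c) ≤ deriv f c * (x - c) :=
            mul_le_mul_of_nonpos_right h2 (by linarith)
          nlinarith [h1, h3, hmul]
        · -- c < x < d : interior
          exact tangent_le hcvx htIoo ⟨hcx, hxd⟩ (hdiffI t htI)
      · -- d ≤ x
        have hdwlt : d < w := lt_of_le_of_lt hdx hxI.2
        have hdKm : d ∈ Kset f J ∩ Ioo v w := ⟨hdK (ne_of_lt hdwlt), lt_of_lt_of_le hvt htd, hdwlt⟩
        have hdCont : ContinuousAt f d := (hdiff d hdJ).continuousAt
        have h1 : deriv f t ≤ slope f t d := E3a hcvx hdCont htIoo (hdiffI t htI)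
        have h2 : deriv f t ≤ deriv f d :=
          le_trans h1 (E2 hcvx hdCont (hdiff d hdJ) htIoo)
        rw [slope_def_field, le_div_iff₀ (by linarith : (0:ℝ) < d - t)] at h1
        have h3 : f d + deriv f d * (x - d) ≤ f x := weak' d hdKm x hxI
        have hmul : deriv f t * (x - d) ≤ deriv f d * (x - d) :=
          mul_le_mul_of_nonneg_right h2 (by linarith)
        nlinarith [h1, h3, hmul]
    · -- the gap is an interval of concavity: impossible
      exfalso
      have hcvxneg : ConvexOn ℝ (Ioo c d) (fun z => -f z) := by
        apply convexOn_of_local (fun y hy => (hdiffI y (hgapsub hy)).neg) _ ?_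
        · intro y hy
          obtain ⟨ε, hε, hJsub, hc⟩ := hGB hy
          obtain ⟨ε', hε', hsub1, hsub2⟩ := hshrink y hy ε hε
          have : ConvexOn ℝ (Ioo (y-ε) (y+ε)) (fun z => -f z) := neg_convexOn_iff.mpr hc
          exact ⟨ε', hε', hsub1, this.subset hsub2 (convex_Ioo _ _)⟩
        · rintro y hy ⟨ε, hε, h0⟩
          refine hgapaff y hy ⟨ε, hε, fun z hz => ?_⟩
          have := h0 z hz
          simp only [Dv, deriv.neg, Pi.neg_apply] at this ⊢
          linarith
      have hne' : c ≠ v ∨ d ≠ w := by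
        by_contra hcon
        push_neg at hcon
        have : t₀ ∈ Ioo c d := by rw [hcon.1, hcon.2]; exact ht₀.2
        exact hgapK t₀ this ht₀.1
      rcases hne' with h | h
      · have hvclt : v < c := lt_of_le_of_ne hvc (Ne.symm h)
        have hcKm : c ∈ Kset f J ∩ Ioo v w := ⟨hcK h, hvclt, lt_of_le_of_lt hct htw⟩
        exact ECl (J := J) hcd hcvxneg (hdiff c hcJ).neg (oneA_neg (hOneA c hcKm))
      · have hdwlt : d < w := lt_of_le_of_ne hdw h
        have hdKm : d ∈ Kset f J ∩ Ioo v w := ⟨hdK h, lt_of_lt_of_le hvt htd, hdwlt⟩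
        exact ECr (J := J) hcd hcvxneg (hdiff d hdJ).neg (oneA_neg (hOneA d hdKm))
  -- conclusion: f is convex on (v,w), contradicting t₀ ∈ Kset
  have hcvxall : ConvexOn ℝ (Ioo v w) f := convexOn_of_tangent_le (convex_Ioo v w) htang
  obtain ⟨ht₀K, ht₀I⟩ := ht₀
  apply ht₀K.2.1
  refine ⟨min (t₀ - v) (w - t₀), lt_min (by linarith [ht₀I.1]) (by linarith [ht₀I.2]), ?_, ?_⟩
  · intro y hy
    have l1 : min (t₀ - v) (w - t₀) ≤ t₀ - v := min_le_left _ _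
    have l2 : min (t₀ - v) (w - t₀) ≤ w - t₀ := min_le_right _ _
    exact hIoosub ⟨by linarith [hy.1], by linarith [hy.2]⟩
  · refine hcvxall.subset ?_ (convex_Ioo _ _)
    intro y hy
    have l1 : min (t₀ - v) (w - t₀) ≤ t₀ - v := min_le_left _ _
    have l2 : min (t₀ - v) (w - t₀) ≤ w - t₀ := min_le_right _ _
    exact ⟨by linarith [hy.1], by linarith [hy.2]⟩

variable {f : ℝ → ℝ} {J : Set ℝ}

lemma kset_neg {t : ℝ} (h : t ∈ Kset f J) : t ∈ Kset (fun x => -f x) J := by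
  refine ⟨h.1, ?_, ?_⟩
  · rintro ⟨ε, hε, hsub, hcvx⟩
    exact h.2.2 ⟨ε, hε, hsub, by simpa using neg_convexOn_iff.mp hcvx⟩
  · rintro ⟨ε, hε, hsub, hccv⟩
    exact h.2.1 ⟨ε, hε, hsub, by simpa using neg_concaveOn_iff.mp hccv⟩

lemma bn_subset_an_neg (n : ℕ) : Bn f n ⊆ An (fun x => -f x) n := by
  intro q hq x hxq hxd
  rw [dv_neg]
  linarith [hq x hxq hxd]

theorem mix (f : ℝ → ℝ) (J : Set ℝ) (hJo : IsOpen J) (hJc : Convex ℝ J)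
    (hdiff : ∀ t ∈ J, DifferentiableAt ℝ f t)
    (hS : ∀ t ∈ J, OneA f J t ∨ OneB f J t)
    {a b : ℝ} (ha : a ∈ J) (hb : b ∈ J)
    (hA : OneA f J a) (hB : OneB f J b) : False := by
  have hminJ : min a b ∈ J := by rcases min_choice a b with h | h <;> rw [h] <;> assumption
  have hmaxJ : max a b ∈ J := by rcases max_choice a b with h | h <;> rw [h] <;> assumption
  set I : Set ℝ := Icc (min a b) (max a b) with hIdef
  have hIJ : I ⊆ J := hJc.ordConnected.out hminJ hmaxJ
  obtain ⟨η, hη, hthick⟩ := isCompact_Icc.exists_thickening_subset_open hJo hIJ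
  have hbigJ : Icc (min a b - 7*η/8) (max a b + 7*η/8) ⊆ J := by
    intro s hs
    apply hthick
    rw [Metric.mem_thickening_iff]
    rcases le_total s (min a b) with h1 | h1
    · refine ⟨min a b, ⟨le_refl _, min_le_max⟩, ?_⟩
      rw [Real.dist_eq, abs_sub_lt_iff]
      constructor <;> linarith [hs.1]
    rcases le_total (max a b) s with h2 | h2
    · refine ⟨max a b, ⟨min_le_max, le_refl _⟩, ?_⟩
      rw [Real.dist_eq, abs_sub_lt_iff]
      constructor <;> linarith [hs.2]
    · exact ⟨s, ⟨h1, h2⟩, by rw [dist_self]; exact hη⟩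
  by_cases hKI : (Kset f J ∩ I).Nonempty
  · -- Baire category argument
    obtain ⟨tstar, htsK, htsI⟩ := hKI
    set ρ := η/2 with hρdef
    have hρ : 0 < ρ := by rw [hρdef]; linarith
    have hIccsub : Icc (tstar - ρ) (tstar + ρ) ⊆ J := by
      intro y hy
      apply hbigJ
      constructor
      · have := htsI.1; simp only [hρdef] at hy; obtain ⟨hy1, hy2⟩ := hy; linarith
      · have := htsI.2; simp only [hρdef] at hy; obtain ⟨hy1, hy2⟩ := hy; linarith
    set X : Set ℝ := Kset f J ∩ Ioo (tstar - ρ) (tstar + ρ) with hXdef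
    set K0 : Set ℝ := closure X with hK0def
    have hXK : X ⊆ Kset f J := fun y hy => hy.1
    have hK0sub : K0 ⊆ Kset f J := by
      intro y hy
      refine kset_closure hXK hy ?_
      have h1 : y ∈ closure (Ioo (tstar - ρ) (tstar + ρ)) :=
        closure_mono inter_subset_right hy
      rw [closure_Ioo (by linarith : tstar - ρ ≠ tstar + ρ)] at h1
      exact hIccsub h1
    have hK0Icc : K0 ⊆ Icc (tstar - ρ) (tstar + ρ) := by
      intro y hy
      have h1 : y ∈ closure (Ioo (tstar - ρ) (tstar + ρ)) :=
        closure_mono inter_subset_right hy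
      rwa [closure_Ioo (by linarith : tstar - ρ ≠ tstar + ρ)] at h1
    have hK0cpt : IsCompact K0 :=
      isCompact_Icc.of_isClosed_subset isClosed_closure hK0Icc
    have hK0ne : K0.Nonempty :=
      ⟨tstar, subset_closure ⟨htsK, ⟨by linarith, by linarith⟩⟩⟩
    set T : ℕ → Set ℝ := fun k => if k % 2 = 0 then An f (k/2) else Bn f (k/2) with hTdef
    have hcover : K0 ⊆ ⋃ k, T k := by
      intro y hy
      have hyK : y ∈ Kset f J := hK0sub hy
      rcases hS y hyK.1 with ⟨δ, hδ, hsubδ, hpos⟩ | ⟨δ, hδ, hsubδ, hneg⟩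
      · obtain ⟨m, hm⟩ := exists_nat_one_div_lt hδ
        refine mem_iUnion.mpr ⟨2*m, ?_⟩
        have e1 : (2*m) % 2 = 0 := by omega
        have e2 : (2*m) / 2 = m := by omega
        rw [hTdef]
        show y ∈ (if (2*m) % 2 = 0 then An f ((2*m)/2) else Bn f ((2*m)/2))
        rw [if_pos e1, e2]
        intro x hxq hxd
        rw [abs_sub_lt_iff] at hxd
        have hml : 1/((m:ℝ)+1) < δ := hm
        exact hpos x ⟨by linarith [hxd.2], by linarith [hxd.1]⟩ hxq
      · obtain ⟨m, hm⟩ := exists_nat_one_div_lt hδ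
        refine mem_iUnion.mpr ⟨2*m+1, ?_⟩
        have e1 : (2*m+1) % 2 = 1 := by omega
        have e2 : (2*m+1) / 2 = m := by omega
        rw [hTdef]
        show y ∈ (if (2*m+1) % 2 = 0 then An f ((2*m+1)/2) else Bn f ((2*m+1)/2))
        rw [if_neg (by omega), e2]
        intro x hxq hxd
        rw [abs_sub_lt_iff] at hxd
        have hml : 1/((m:ℝ)+1) < δ := hm
        exact hneg x ⟨by linarith [hxd.2], by linarith [hxd.1]⟩ hxq
    obtain ⟨N, t₁, r, ht₁K0, hr, hdense0⟩ := baire_dense hK0cpt hK0ne T hcover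
    obtain ⟨t₂, ht₂X, ht₂d⟩ := Metric.mem_closure_iff.mp ht₁K0 (r/2) (by linarith)
    have ht₂K : t₂ ∈ Kset f J := ht₂X.1
    have hρt₂ : |t₂ - tstar| < ρ := by
      rw [abs_sub_lt_iff]
      exact ⟨by linarith [ht₂X.2.2], by linarith [ht₂X.2.1]⟩
    set n := N / 2 with hndef
    set r' := min (r/2) (min ((ρ - |t₂ - tstar|)/2) (1/(2*((n:ℝ)+1)))) with hr'def
    have hr'pos : 0 < r' := by
      refine lt_min (by linarith) (lt_min (by linarith) ?_)
      positivity
    have hr'le1 : r' ≤ r/2 := min_le_left _ _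
    have hr'le2 : r' ≤ (ρ - |t₂ - tstar|)/2 := (min_le_right _ _).trans (min_le_left _ _)
    have hr'le3 : r' ≤ 1/(2*((n:ℝ)+1)) := (min_le_right _ _).trans (min_le_right _ _)
    set v := t₂ - r' with hvdef
    set w := t₂ + r' with hwdef
    have hvw : v < w := by rw [hvdef, hwdef]; linarith
    have habs1 : t₂ - tstar ≤ |t₂ - tstar| := le_abs_self _
    have habs2 : tstar - t₂ ≤ |t₂ - tstar| := by rw [abs_sub_comm]; exact le_abs_self _
    have hIccw : Icc v w ⊆ Icc (tstar - ρ) (tstar + ρ) := by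
      intro y hy
      rw [hvdef] at hy; rw [hwdef] at hy
      constructor
      · linarith [hy.1, habs2, hρt₂, hr'le2]
      · linarith [hy.2, habs1, hρt₂, hr'le2]
    have hIoow : Ioo v w ⊆ Ioo (tstar - ρ) (tstar + ρ) := by
      intro y hy
      rw [hvdef] at hy; rw [hwdef] at hy
      constructor
      · have := hy.1; linarith [habs2, hρt₂, hr'le2]
      · have := hy.2; linarith [habs1, hρt₂, hr'le2]
    have hsubJ : Icc v w ⊆ J := fun y hy => hIccsub (hIccw hy)
    have hlen : w - v ≤ 1/((n:ℝ)+1) := by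
      rw [hvdef, hwdef]
      have : 2*r' ≤ 2*(1/(2*((n:ℝ)+1))) := by linarith
      rw [show 2*(1/(2*((n:ℝ)+1))) = 1/((n:ℝ)+1) by field_simp] at this
      linarith
    have ht₂Ioo : t₂ ∈ Ioo v w := by
      rw [hvdef, hwdef]; exact ⟨by linarith, by linarith⟩
    have ht₂mem : t₂ ∈ Kset f J ∩ Ioo v w := ⟨ht₂K, ht₂Ioo⟩
    have hKIoo_sub : ∀ s ∈ Kset f J ∩ Ioo v w, s ∈ K0 ∩ Ioo (t₁ - r) (t₁ + r) := by
      intro s hs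
      refine ⟨subset_closure ⟨hs.1, hIoow hs.2⟩, ?_⟩
      have hs2 := hs.2
      rw [hvdef, hwdef, mem_Ioo] at hs2
      have h1 : |s - t₂| < r' := by rw [abs_sub_lt_iff]; exact ⟨by linarith [hs2.2], by linarith [hs2.1]⟩
      have h2 : |t₂ - t₁| < r/2 := by
        rw [abs_sub_comm, ← Real.dist_eq]; exact ht₂d
      have htri : |s - t₁| ≤ |s - t₂| + |t₂ - t₁| := abs_sub_le s t₂ t₁
      have habs2 : |s - t₁| < r := by linarith
      rw [mem_Ioo]
      rw [abs_sub_lt_iff] at habs2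
      exact ⟨by linarith [habs2.2], by linarith [habs2.1]⟩
    rcases Nat.even_or_odd N with hNe | hNo
    · have e1 : N % 2 = 0 := Nat.even_iff.mp hNe
      have hTN : T N = An f n := by
        rw [hTdef]
        show (if N % 2 = 0 then An f (N/2) else Bn f (N/2)) = An f n
        rw [if_pos e1, hndef]
      have hdense' : ∀ s ∈ Kset f J ∩ Ioo v w, s ∈ closure (An f n ∩ Ioo v w) := by
        intro s hs
        have h0 := hdense0 s (hKIoo_sub s hs)
        rw [hTN] at h0
        have h2 := isOpen_Ioo.inter_closure (⟨hs.2, h0⟩ : s ∈ Ioo v w ∩ closure (An f n ∩ K0))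
        refine closure_mono ?_ h2
        rintro y ⟨hy1, hy2, hy3⟩
        exact ⟨hy2, hy1⟩
      exact core f J hdiff hS n v w t₂ hvw hsubJ hlen ht₂mem hdense'
    · have e1 : N % 2 = 1 := Nat.odd_iff.mp hNo
      have hTN : T N = Bn f n := by
        rw [hTdef]
        show (if N % 2 = 0 then An f (N/2) else Bn f (N/2)) = Bn f n
        rw [if_neg (by omega), hndef]
      set g : ℝ → ℝ := fun x => -f x with hgdef
      have hdiffg : ∀ t ∈ J, DifferentiableAt ℝ g t := fun t ht => (hdiff t ht).neg
      have hSg : ∀ t ∈ J, OneA g J t ∨ OneB g J t := by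
        intro t ht
        rcases hS t ht with h | h
        · exact Or.inr (oneA_neg h)
        · exact Or.inl (oneB_neg h)
      have ht₂g : t₂ ∈ Kset g J ∩ Ioo v w := ⟨kset_neg ht₂K, ht₂Ioo⟩
      have hdenseg : ∀ s ∈ Kset g J ∩ Ioo v w, s ∈ closure (An g n ∩ Ioo v w) := by
        intro s hs
        have hsf : s ∈ Kset f J := by
          refine ⟨hs.1.1, ?_, ?_⟩
          · rintro ⟨ε, hε, hsb, hc⟩
            refine hs.1.2.2 ⟨ε, hε, hsb, ?_⟩
            exact (neg_concaveOn_iff.mpr hc : ConcaveOn ℝ _ g)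
          · rintro ⟨ε, hε, hsb, hc⟩
            refine hs.1.2.1 ⟨ε, hε, hsb, ?_⟩
            exact (neg_convexOn_iff.mpr hc : ConvexOn ℝ _ g)
        have h0 := hdense0 s (hKIoo_sub s ⟨hsf, hs.2⟩)
        rw [hTN] at h0
        have h2 := isOpen_Ioo.inter_closure (⟨hs.2, h0⟩ : s ∈ Ioo v w ∩ closure (Bn f n ∩ K0))
        refine closure_mono ?_ h2
        rintro y ⟨hy1, hy2, hy3⟩
        exact ⟨bn_subset_an_neg n hy2, hy1⟩
      exact core g J hdiffg hSg n v w t₂ hvw hsubJ hlen ht₂g hdenseg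
  · -- no Kset points on I : I is covered by local convexity/concavity sets
    have hIG : I ⊆ {t | LocCvx f J t} ∪ {t | LocCcv f J t} := by
      intro y hy
      by_contra hcon
      rw [mem_union] at hcon
      push_neg at hcon
      exact hKI ⟨y, ⟨hIJ hy, hcon.1, hcon.2⟩, hy⟩
    have hdisjset : Disjoint {t | LocCvx f J t} {t | LocCcv f J t} := by
      rw [Set.disjoint_left]
      intro z hz1 hz2
      exact locCvx_locCcv_false hz1 hz2 (hdiff z (locCvx_mem hz1)) (hS z (locCvx_mem hz1))
    rcases isPreconnected_Icc.subset_or_subset isOpen_locCvx isOpen_locCcv hdisjset hIG with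
      hGA | hGB
    · exact locCvx_oneB_false (hGA ⟨min_le_right a b, le_max_right a b⟩) (hdiff b hb) hB
    · exact locCcv_oneA_false (hGB ⟨min_le_left a b, le_max_left a b⟩) (hdiff a ha) hA

/-- On a convex open set where `f` is everywhere locally strictly above its tangent lines, every
chord lies strictly above the graph. -/
theorem allA_chord (f : ℝ → ℝ) (J : Set ℝ) (hJc : Convex ℝ J)
    (hdiff : ∀ t ∈ J, DifferentiableAt ℝ f t)
    (hA : ∀ t ∈ J, OneA f J t)
    {s u τ : ℝ} (hs : s ∈ J) (hu : u ∈ J) (hτ : τ ∈ Ioo s u) :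
    f τ < f s + (f u - f s)/(u - s) * (τ - s) := by
  have hsu : s < u := hτ.1.trans hτ.2
  have husne : u - s ≠ 0 := sub_ne_zero.mpr (ne_of_gt hsu)
  have hIccJ : Icc s u ⊆ J := hJc.ordConnected.out hs hu
  obtain ⟨K, hK⟩ : ∃ K : ℝ, K = (f u - f s)/(u-s) := ⟨_, rfl⟩
  have hKu : K*(u-s) = f u - f s := by rw [hK]; field_simp
  rw [← hK]
  set F : ℝ → ℝ := fun y => f y - (f s + K*(y-s)) with hFdef
  have hFcont : ContinuousOn F (Icc s u) := by
    apply ContinuousOn.sub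
    · exact fun y hy => ((hdiff y (hIccJ hy)).continuousAt).continuousWithinAt
    · exact (continuous_const.add
        (continuous_const.mul (continuous_id.sub continuous_const))).continuousOn
  obtain ⟨m, hmIcc, hmax⟩ := isCompact_Icc.exists_isMaxOn (nonempty_Icc.mpr hsu.le) hFcont
  have hFs : F s = 0 := by simp [hFdef]
  have hFu : F u = 0 := by simp only [hFdef]; linarith [hKu]
  have hnoint : ∀ y ∈ Ioo s u, ¬ IsMaxOn F (Icc s u) y := by
    intro y hy hymax
    have hyJ : y ∈ J := hIccJ ⟨hy.1.le, hy.2.le⟩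
    obtain ⟨δ, hδ, hsubδ, hpos⟩ := hA y hyJ
    have hda : HasDerivAt (fun z => f s + K*(z-s)) K y := by
      have := (((hasDerivAt_id y).sub_const s).const_mul K).const_add (f s)
      simpa using this
    have hdF : HasDerivAt F (deriv f y - K) y := (hdiff y hyJ).hasDerivAt.sub hda
    have hloc : IsLocalMax F y := hymax.isLocalMax (Icc_mem_nhds hy.1 hy.2)
    have hz : deriv F y = 0 := hloc.deriv_eq_zero
    have hdy : deriv f y = K := by
      have := hdF.deriv
      rw [hz] at this
      linarith [this.symm]
    have h0 : 0 < min δ (u - y) := lt_min hδ (by linarith [hy.2])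
    have l1 := min_le_left δ (u-y)
    have l2 := min_le_right δ (u-y)
    set z := y + min δ (u - y)/2 with hzdef
    have hzw : z ∈ Ioo (y-δ) (y+δ) := ⟨by simp only [hzdef]; linarith, by
      simp only [hzdef]; linarith⟩
    have hzI : z ∈ Icc s u := ⟨by simp only [hzdef]; linarith [hy.1], by
      simp only [hzdef]; linarith⟩
    have hzne : z ≠ y := ne_of_gt (by simp only [hzdef]; linarith)
    have hDz := hpos z hzw hzne
    simp only [Dv, hdy] at hDz
    have hcontr : F z ≤ F y := hymax hzI
    simp only [hFdef] at hcontr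
    have hKlin : K*(z-s) - K*(y-s) = K*(z-y) := by ring
    linarith
  have hFm : F m ≤ 0 := by
    by_contra hpos
    push_neg at hpos
    have hms : m ≠ s := fun h => by rw [h, hFs] at hpos; exact lt_irrefl _ hpos
    have hmu : m ≠ u := fun h => by rw [h, hFu] at hpos; exact lt_irrefl _ hpos
    exact hnoint m ⟨lt_of_le_of_ne hmIcc.1 (Ne.symm hms), lt_of_le_of_ne hmIcc.2 hmu⟩ hmax
  have hFτ : F τ ≤ 0 := le_trans (hmax ⟨hτ.1.le, hτ.2.le⟩) hFm
  rcases lt_or_eq_of_le hFτ with h | h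
  · simp only [hFdef] at h; linarith
  · exfalso
    apply hnoint τ hτ
    intro y hy
    calc F y ≤ F m := hmax hy
    _ ≤ 0 := hFm
    _ = F τ := h.symm

section Line

variable (ψ : ℂ → ℝ) (Ω : Set ℂ) (p w : ℂ)

lemma line_cont : Continuous (fun t : ℝ => p + t • w) :=
  continuous_const.add (continuous_id.smul continuous_const)

lemma line_hasDerivAt {t : ℝ} (hd : DifferentiableAt ℝ ψ (p + t • w)) :
    HasDerivAt (fun t : ℝ => ψ (p + t • w)) (fderiv ℝ ψ (p + t • w) w) t := by
  have hγ : HasDerivAt (fun t : ℝ => p + t • w) w t := by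
    simpa using ((hasDerivAt_id t).smul_const w).const_add p
  exact hd.hasFDerivAt.comp_hasDerivAt t hγ

lemma line_dv {s t : ℝ} (hd : DifferentiableAt ℝ ψ (p + s • w)) :
    Dv (fun t : ℝ => ψ (p + t • w)) s t = tangentDev ψ (p + s • w) (p + t • w) := by
  have hder : deriv (fun t : ℝ => ψ (p + t • w)) s = fderiv ℝ ψ (p + s • w) w :=
    (line_hasDerivAt ψ p w hd).deriv
  have harg : (p + t • w) - (p + s • w) = (t - s) • w := by
    rw [sub_smul]; abel
  rw [Dv, tangentDev, hder, harg, map_smul, smul_eq_mul]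
  ring

lemma lineJ_open (hΩ : IsOpen Ω) : IsOpen {t : ℝ | p + t • w ∈ Ω} :=
  hΩ.preimage (line_cont p w)

lemma lineJ_convex (hΩ : Convex ℝ Ω) : Convex ℝ {t : ℝ | p + t • w ∈ Ω} := by
  intro t₁ h₁ t₂ h₂ a b ha hb hab
  show p + (a • t₁ + b • t₂) • w ∈ Ω
  have hcomb : p + (a • t₁ + b • t₂) • w = a • (p + t₁ • w) + b • (p + t₂ • w) := by
    simp only [smul_eq_mul, smul_add, add_smul, mul_smul]
    rw [show a • p + a • (t₁ • w) + (b • p + b • (t₂ • w))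
        = (a + b) • p + (a • (t₁ • w) + b • (t₂ • w)) by rw [add_smul]; abel, hab, one_smul]
    try abel
  rw [hcomb]
  exact hΩ h₁ h₂ ha hb hab

lemma transfer_A (hw : w ≠ 0) {s : ℝ}
    (h : ∃ U ∈ nhds (p + s • w), U ⊆ Ω ∧
      ∀ q ∈ U \ {p + s • w}, 0 < tangentDev ψ (p + s • w) q)
    (hd : DifferentiableAt ℝ ψ (p + s • w)) :
    OneA (fun t : ℝ => ψ (p + t • w)) {t : ℝ | p + t • w ∈ Ω} s := by
  obtain ⟨U, hU, hUΩ, hpos⟩ := h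
  have hpre : (fun t : ℝ => p + t • w) ⁻¹' U ∈ nhds s :=
    (line_cont p w).continuousAt.preimage_mem_nhds hU
  obtain ⟨δ, hδ, hball⟩ := Metric.mem_nhds_iff.mp hpre
  rw [Real.ball_eq_Ioo] at hball
  refine ⟨δ, hδ, fun t ht => hUΩ (hball ht), fun t ht hts => ?_⟩
  rw [line_dv ψ p w hd]
  refine hpos _ ⟨hball ht, ?_⟩
  intro hmem
  rw [mem_singleton_iff] at hmem
  apply hts
  have : (t - s) • w = 0 := by
    have := sub_eq_zero.mpr hmem
    rw [show p + t • w - (p + s • w) = (t - s) • w by rw [sub_smul]; abel] at this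
    exact this
  rcases smul_eq_zero.mp this with h | h
  · linarith [sub_eq_zero.mp h]
  · exact absurd h hw

lemma transfer_B (hw : w ≠ 0) {s : ℝ}
    (h : ∃ U ∈ nhds (p + s • w), U ⊆ Ω ∧
      ∀ q ∈ U \ {p + s • w}, tangentDev ψ (p + s • w) q < 0)
    (hd : DifferentiableAt ℝ ψ (p + s • w)) :
    OneB (fun t : ℝ => ψ (p + t • w)) {t : ℝ | p + t • w ∈ Ω} s := by
  obtain ⟨U, hU, hUΩ, hneg⟩ := h
  have hpre : (fun t : ℝ => p + t • w) ⁻¹' U ∈ nhds s :=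
    (line_cont p w).continuousAt.preimage_mem_nhds hU
  obtain ⟨δ, hδ, hball⟩ := Metric.mem_nhds_iff.mp hpre
  rw [Real.ball_eq_Ioo] at hball
  refine ⟨δ, hδ, fun t ht => hUΩ (hball ht), fun t ht hts => ?_⟩
  rw [line_dv ψ p w hd]
  refine hneg _ ⟨hball ht, ?_⟩
  intro hmem
  rw [mem_singleton_iff] at hmem
  apply hts
  have : (t - s) • w = 0 := by
    have := sub_eq_zero.mpr hmem
    rw [show p + t • w - (p + s • w) = (t - s) • w by rw [sub_smul]; abel] at this
    exact this
  rcases smul_eq_zero.mp this with h | h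
  · linarith [sub_eq_zero.mp h]
  · exact absurd h hw

end Line

/-- Everywhere locally strictly above tangent planes implies strict convexity. -/
lemma strictConvex_of_allA (Ω : Set ℂ) (hΩo : IsOpen Ω) (hΩc : Convex ℝ Ω)
    (ψ : ℂ → ℝ) (hdiff : ∀ p ∈ Ω, DifferentiableAt ℝ ψ p)
    (hall : ∀ p ∈ Ω, ∃ U ∈ nhds p, U ⊆ Ω ∧ ∀ q ∈ U \ {p}, 0 < tangentDev ψ p q) :
    StrictConvexOn ℝ Ω ψ := by
  refine ⟨hΩc, ?_⟩
  intro x hx y hy hxy a b ha hb hab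
  set wv := y - x with hwv
  have hw0 : wv ≠ 0 := sub_ne_zero.mpr (Ne.symm hxy)
  set J := {t : ℝ | x + t • wv ∈ Ω} with hJdef
  set f := fun t : ℝ => ψ (x + t • wv) with hfdef
  have hJo := lineJ_open Ω x wv hΩo
  have hJc := lineJ_convex Ω x wv hΩc
  have hmemJ : ∀ t : ℝ, t ∈ J ↔ x + t • wv ∈ Ω := fun t => Iff.rfl
  have hdiffJ : ∀ t ∈ J, DifferentiableAt ℝ f t := by
    intro t ht
    exact (line_hasDerivAt ψ x wv (hdiff _ ht)).differentiableAt
  have hAJ : ∀ t ∈ J, OneA f J t := by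
    intro t ht
    exact transfer_A ψ Ω x wv hw0 (hall _ ht) (hdiff _ ht)
  have h0 : (0:ℝ) ∈ J := by
    show x + (0:ℝ) • wv ∈ Ω
    simpa using hx
  have h1 : (1:ℝ) ∈ J := by
    show x + (1:ℝ) • wv ∈ Ω
    rw [one_smul, hwv]
    simpa using hy
  have hbI : b ∈ Ioo (0:ℝ) 1 := ⟨hb, by linarith⟩
  have hch := allA_chord f J hJc hdiffJ hAJ h0 h1 hbI
  have hpt : x + b • wv = a • x + b • y := by
    rw [hwv, smul_sub]
    have ha' : a = 1 - b := by linarith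
    rw [ha', sub_smul, one_smul]
    abel
  have hf0 : f 0 = ψ x := by rw [hfdef]; simp
  have hf1 : f 1 = ψ y := by
    rw [hfdef]; simp only [one_smul, hwv]; norm_num
  have hfb : f b = ψ (a • x + b • y) := by
    show ψ (x + b • wv) = _
    rw [hpt]
  rw [hf0, hf1, hfb] at hch
  rw [show (1:ℝ) - 0 = 1 by norm_num, div_one, sub_zero] at hch
  have ha' : a = 1 - b := by linarith
  have hkey : a * ψ x = (1 - b) * ψ x := by rw [ha']
  simp only [smul_eq_mul]
  linarith [hch, hkey]


open Stmt16Aux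

end Stmt16Aux

open Stmt16Aux

theorem stmt16 (Ω : Set ℂ) (hΩopen : IsOpen Ω) (hΩconv : Convex ℝ Ω) (hΩne : Ω.Nonempty)
    (ψ : ℂ → ℝ) (hdiff : ∀ p ∈ Ω, DifferentiableAt ℝ ψ p)
    (halt : ∀ p ∈ Ω, ∃ U ∈ nhds p, U ⊆ Ω ∧
      ((∀ q ∈ U \ {p}, 0 < tangentDev ψ p q) ∨ (∀ q ∈ U \ {p}, tangentDev ψ p q < 0))) :
    ((∀ p ∈ Ω, ∃ U ∈ nhds p, U ⊆ Ω ∧ ∀ q ∈ U \ {p}, 0 < tangentDev ψ p q) ∧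
        StrictConvexOn ℝ Ω ψ) ∨
    ((∀ p ∈ Ω, ∃ U ∈ nhds p, U ⊆ Ω ∧ ∀ q ∈ U \ {p}, tangentDev ψ p q < 0) ∧
        StrictConcaveOn ℝ Ω ψ) := by
  have hdich : (∀ p ∈ Ω, ∃ U ∈ nhds p, U ⊆ Ω ∧ ∀ q ∈ U \ {p}, 0 < tangentDev ψ p q) ∨
      (∀ p ∈ Ω, ∃ U ∈ nhds p, U ⊆ Ω ∧ ∀ q ∈ U \ {p}, tangentDev ψ p q < 0) := by
    by_contra hcon
    push_neg at hcon
    obtain ⟨⟨p₁, hp₁, hp₁A⟩, ⟨p₂, hp₂, hp₂B⟩⟩ := hcon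
    have hp₁B : ∃ U ∈ nhds p₁, U ⊆ Ω ∧ ∀ q ∈ U \ {p₁}, tangentDev ψ p₁ q < 0 := by
      obtain ⟨U, hU, hUΩ, hor⟩ := halt p₁ hp₁
      rcases hor with h | h
      · exfalso
        obtain ⟨q, hq, hle⟩ := hp₁A U hU hUΩ
        exact absurd (h q hq) (not_lt.mpr hle)
      · exact ⟨U, hU, hUΩ, h⟩
    have hp₂A : ∃ U ∈ nhds p₂, U ⊆ Ω ∧ ∀ q ∈ U \ {p₂}, 0 < tangentDev ψ p₂ q := by
      obtain ⟨U, hU, hUΩ, hor⟩ := halt p₂ hp₂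
      rcases hor with h | h
      · exact ⟨U, hU, hUΩ, h⟩
      · exfalso
        obtain ⟨q, hq, hge⟩ := hp₂B U hU hUΩ
        exact absurd (h q hq) (not_lt.mpr hge)
    by_cases hpq : p₂ = p₁
    · subst hpq
      obtain ⟨U, hU, hUΩ, hposU⟩ := hp₂A
      obtain ⟨V, hV, hVΩ, hnegV⟩ := hp₁B
      have hmem : (U ∩ V) \ {p₂} ∈ 𝓝[≠] p₂ := by
        apply diff_mem_nhdsWithin_compl
        exact inter_mem hU hV
      obtain ⟨q, hq⟩ := Filter.nonempty_of_mem hmem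
      have h1 := hposU q ⟨hq.1.1, hq.2⟩
      have h2 := hnegV q ⟨hq.1.2, hq.2⟩
      linarith
    · set wv := p₁ - p₂ with hwv
      have hw0 : wv ≠ 0 := sub_ne_zero.mpr (Ne.symm hpq)
      set J := {t : ℝ | p₂ + t • wv ∈ Ω} with hJdef
      set f := fun t : ℝ => ψ (p₂ + t • wv) with hfdef
      have hdiffJ : ∀ t ∈ J, DifferentiableAt ℝ f t := fun t ht =>
        (line_hasDerivAt ψ p₂ wv (hdiff _ ht)).differentiableAt
      have hSJ : ∀ t ∈ J, OneA f J t ∨ OneB f J t := by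
        intro t ht
        obtain ⟨U, hU, hUΩ, hor⟩ := halt _ ht
        rcases hor with h | h
        · exact Or.inl (transfer_A ψ Ω p₂ wv hw0 ⟨U, hU, hUΩ, h⟩ (hdiff _ ht))
        · exact Or.inr (transfer_B ψ Ω p₂ wv hw0 ⟨U, hU, hUΩ, h⟩ (hdiff _ ht))
      have h0 : (0:ℝ) ∈ J := by show p₂ + (0:ℝ) • wv ∈ Ω; simpa using hp₂
      have h1 : (1:ℝ) ∈ J := by
        show p₂ + (1:ℝ) • wv ∈ Ω
        rw [one_smul, hwv]
        simpa using hp₁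
      have hA0 : OneA f J 0 := by
        refine transfer_A ψ Ω p₂ wv hw0 ?_ (hdiff _ h0)
        have he : p₂ + (0:ℝ) • wv = p₂ := by simp
        rw [he]
        exact hp₂A
      have hB1 : OneB f J 1 := by
        refine transfer_B ψ Ω p₂ wv hw0 ?_ (hdiff _ h1)
        have he : p₂ + (1:ℝ) • wv = p₁ := by rw [one_smul, hwv]; abel
        rw [he]
        exact hp₁B
      exact mix f J (lineJ_open Ω p₂ wv hΩopen) (lineJ_convex Ω p₂ wv hΩconv)
        hdiffJ hSJ h0 h1 hA0 hB1
  rcases hdich with hall | hall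
  · exact Or.inl ⟨hall, strictConvex_of_allA Ω hΩopen hΩconv ψ hdiff hall⟩
  · refine Or.inr ⟨hall, ?_⟩
    have hdiffn : ∀ p ∈ Ω, DifferentiableAt ℝ (fun z => -ψ z) p := fun p hp => (hdiff p hp).neg
    have halln : ∀ p ∈ Ω, ∃ U ∈ nhds p, U ⊆ Ω ∧
        ∀ q ∈ U \ {p}, 0 < tangentDev (fun z => -ψ z) p q := by
      intro p hp
      obtain ⟨U, hU, hUΩ, hneg⟩ := hall p hp
      refine ⟨U, hU, hUΩ, fun q hq => ?_⟩
      have htd : tangentDev (fun z => -ψ z) p q = - tangentDev ψ p q := by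
        simp only [tangentDev, fderiv_fun_neg]
        simp only [ContinuousLinearMap.neg_apply]
        ring
      rw [htd]
      linarith [hneg q hq]
    have hcv := strictConvex_of_allA Ω hΩopen hΩconv (fun z => -ψ z) hdiffn halln
    have : StrictConvexOn ℝ Ω (-ψ) := hcv
    exact neg_strictConvexOn_iff.mp this
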